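/- Let H be a proper subgroup of a finite group G, V an F H-module (char F ∤ |G|), W = Ind_H^G V = ⊕_{g∈C} g·V with 1 ∈ C, and let R = S(W)/J where J is the ideal generated by all products (g·v)(g'·v') with v,v' ∈ V and g ≠ g' in C. Let T ⊂ R be the image of S(V). Then R_+^G R ∩ T ⊆ T_+^H T_+. -/

import Mathlib

/-!
Each projection `P_c : W → c·V` of `W = ⊕_{c ∈ C} c·V` kills the generators of `J`, so it
induces an algebra endomorphism of `R`; the one for `c = 1` is a retraction `π : R → T` which
commutes with `H`. For `g ∉ H`, the linear forms `g·v` lie in another summand, so `π ∘ g` sends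
`T₊` to `0`. Writing `x ∈ T ∩ R₊^G R` as `∑ rᵢ sᵢ` with `G`-invariants `sᵢ` of positive degree,
`x = π x - π (g x) = ∑ π(sᵢ) π(rᵢ - g rᵢ)`, where `π(sᵢ) ∈ T₊` is `H`-invariant and
`π(rᵢ - g rᵢ) ∈ T₊`.
-/

noncomputable section
open MvPolynomial

variable {F : Type} [Field F]

/-- The algebra homomorphism between polynomial algebras (viewed as symmetric algebras)
induced by a linear map between the spaces of variables (the degree one components). -/
noncomputable def algOf {α β : Type} [Fintype α] [Fintype β] [DecidableEq α]
    (f : (α → F) →ₗ[F] (β → F)) :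
    MvPolynomial α F →ₐ[F] MvPolynomial β F :=
  aeval fun j => ∑ i, f (Pi.single j 1) i • X i

/-- The embedding of the space of linear forms into the polynomial algebra. -/
noncomputable def lin {β : Type} [Fintype β] (w : β → F) : MvPolynomial β F :=
  ∑ i, w i • X i

/-- The subalgebra of `G`-invariants of the symmetric algebra of a representation. -/
def invariants {G : Type} [Group G] {α : Type} [Fintype α] [DecidableEq α]
    (ρ : Representation F G (α → F)) : Subalgebra F (MvPolynomial α F) where
  carrier := {p | ∀ g : G, algOf (ρ g) p = p}
  mul_mem' := fun ha hb g => by rw [map_mul, ha g, hb g]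
  add_mem' := fun ha hb g => by rw [map_add, ha g, hb g]
  algebraMap_mem' := fun r g => (algOf (ρ g)).commutes r

variable {G : Type} [Group G] {α : Type} [Fintype α] [DecidableEq α]

/-- The invariant ring is generated as an `F`-algebra in degrees at most `d`. -/
def genLE (ρ : Representation F G (α → F)) (d : ℕ) : Prop :=
  Algebra.adjoin F {p : MvPolynomial α F | p ∈ invariants ρ ∧ p.totalDegree ≤ d}
    = invariants ρ

/-- The Noether number `β(G,W)` of a representation. -/
def noether (ρ : Representation F G (α → F)) : ℕ := sInf {d | genLE ρ d}

/-- The Hilbert ideal: the ideal of `S(W)` generated by the invariants of positive degree. -/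
def hilbertIdeal (ρ : Representation F G (α → F)) : Ideal (MvPolynomial α F) :=
  Ideal.span {p | p ∈ invariants ρ ∧ constantCoeff p = 0}

/-- `b(G,W)`: the top degree of the algebra of coinvariants `S(W)/S(W)₊^G S(W)`. -/
def coinvTop (ρ : Representation F G (α → F)) : ℕ :=
  sSup {d | ∃ p : MvPolynomial α F, p.IsHomogeneous d ∧ p ∉ hilbertIdeal ρ}

/-- `b_k(G,W)`: the top degree of `S(W)/((S(W)₊^G)^k S(W))`. -/
def coinvTopK (ρ : Representation F G (α → F)) (k : ℕ) : ℕ :=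
  sSup {d | ∃ p : MvPolynomial α F, p.IsHomogeneous d ∧ p ∉ (hilbertIdeal ρ) ^ k}

/-- The span of all products of `k` positive-degree invariants,
i.e. `(S(W)₊^G)^k` computed inside the invariant ring. -/
def prodPow (ρ : Representation F G (α → F)) (k : ℕ) : Submodule F (MvPolynomial α F) :=
  Submodule.span F {x | ∃ f : Fin k → MvPolynomial α F,
    (∀ i, f i ∈ invariants ρ ∧ constantCoeff (f i) = 0) ∧ x = ∏ i, f i}

/-- The `k`-th Noether number `β_k(G,W)`, the top degree of `S(W)^G/(S(W)₊^G)^{k+1}`. -/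
def noetherK (ρ : Representation F G (α → F)) (k : ℕ) : ℕ :=
  sSup {d | ∃ p, p ∈ invariants ρ ∧ p.IsHomogeneous d ∧ p ∉ prodPow ρ (k+1)}

/-- `β(G)`: the supremum of the Noether numbers over all finite dimensional modules. -/
def noetherSup (F G : Type) [Field F] [Group G] : ℕ∞ :=
  ⨆ (n : ℕ) (ρ : Representation F G (Fin n → F)), (noether ρ : ℕ∞)

/-- `b(G)`: the supremum of `b(G,W)` over all finite dimensional modules. -/
def coinvSup (F G : Type) [Field F] [Group G] : ℕ∞ :=
  ⨆ (n : ℕ) (ρ : Representation F G (Fin n → F)), (coinvTop ρ : ℕ∞)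

/-- `β_k(G)`: the supremum of the `k`-th Noether numbers over all modules. -/
def noetherKSup (F G : Type) [Field F] [Group G] (k : ℕ) : ℕ∞ :=
  ⨆ (n : ℕ) (ρ : Representation F G (Fin n → F)), (noetherK ρ k : ℕ∞)

/-- The ideal `J` of `S(W)` generated by the products `(g·v)(g'·v')` of linear forms
coming from distinct summands of `W = ⊕_{g ∈ C} g·V`. -/
noncomputable def Jideal {G : Type} [Group G] {n m : ℕ}
    (σ : Representation F G (Fin m → F)) (ι : (Fin n → F) →ₗ[F] (Fin m → F))
    (C : Set G) : Ideal (MvPolynomial (Fin m) F) :=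
  Ideal.span {x | ∃ c ∈ C, ∃ c' ∈ C, c ≠ c' ∧ ∃ v v' : Fin n → F,
    x = lin (σ c (ι v)) * lin (σ c' (ι v'))}

section LinearForms

variable {β γ : Type} [Fintype β] [Fintype γ]

theorem lin_eq_linearCombination (w : β → F) :
    lin w = Fintype.linearCombination F (X : β → MvPolynomial β F) w := by
  simp [lin, Fintype.linearCombination_apply]

theorem lin_zero : lin (0 : β → F) = 0 := by simp [lin]

theorem constantCoeff_lin (w : β → F) : constantCoeff (lin w) = 0 := by simp [lin]

theorem algOf_X (f : (α → F) →ₗ[F] (β → F)) (j : α) :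
    algOf f (X j) = lin (f (Pi.single j 1)) := by
  simp [algOf, lin]

theorem algOf_lin (f : (α → F) →ₗ[F] (β → F)) (w : α → F) :
    algOf f (lin w) = lin (f w) := by
  have : (algOf f).toLinearMap ∘ₗ Fintype.linearCombination F X =
      Fintype.linearCombination F X ∘ₗ f := by
    ext j
    simp [algOf_X, lin_eq_linearCombination]
  rw [lin_eq_linearCombination, lin_eq_linearCombination]
  exact LinearMap.congr_fun this w

theorem algOf_comp_apply [DecidableEq β] (f : (β → F) →ₗ[F] (γ → F))
    (g : (α → F) →ₗ[F] (β → F)) (p : MvPolynomial α F) :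
    algOf f (algOf g p) = algOf (f ∘ₗ g) p := by
  have : (algOf f).comp (algOf g) = algOf (f ∘ₗ g) :=
    MvPolynomial.algHom_ext fun j => by
      rw [AlgHom.comp_apply, algOf_X, algOf_lin, algOf_X, LinearMap.comp_apply]
  exact AlgHom.congr_fun this p

theorem constantCoeff_algOf (f : (α → F) →ₗ[F] (β → F)) (p : MvPolynomial α F) :
    constantCoeff (algOf f p) = constantCoeff p := by
  induction p using MvPolynomial.induction_on with
  | C r => simp [algOf]
  | add p q hp hq => simp [hp, hq]
  | mul_X p j hp => simp [hp, algOf_X, constantCoeff_lin]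

theorem algOf_zero (p : MvPolynomial α F) :
    algOf (0 : (α → F) →ₗ[F] (β → F)) p = C (constantCoeff p) := by
  simp only [algOf, LinearMap.zero_apply, Pi.zero_apply, zero_smul, Finset.sum_const_zero]
  exact aeval_zero' p

theorem exists_algOf_eq_algOf_of_range_le [DecidableEq β] {ι : (β → F) →ₗ[F] (γ → F)}
    (hι : Function.Injective ι) {L : (α → F) →ₗ[F] (γ → F)}
    (hL : LinearMap.range L ≤ LinearMap.range ι) (p : MvPolynomial α F) :
    ∃ u, constantCoeff u = constantCoeff p ∧ algOf L p = algOf ι u := by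
  let L' := (LinearEquiv.ofInjective ι hι).symm.toLinearMap ∘ₗ
    L.codRestrict (LinearMap.range ι) fun w => hL ⟨w, rfl⟩
  have hL' : ι ∘ₗ L' = L := LinearMap.ext fun w => by simp [L']
  exact ⟨algOf L' p, constantCoeff_algOf L' p, by rw [algOf_comp_apply, hL']⟩

end LinearForms

section Quotient

variable {J : Ideal (MvPolynomial α F)} {f : (α → F) →ₗ[F] (α → F)}

theorem quotientMapₐ_algOf_mk_algOf {β : Type} [Fintype β] [DecidableEq β]
    (hf : J ≤ J.comap (algOf f)) (g : (β → F) →ₗ[F] (α → F)) (p : MvPolynomial β F) :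
    Ideal.quotientMapₐ J (algOf f) hf (Ideal.Quotient.mk J (algOf g p)) =
      Ideal.Quotient.mk J (algOf (f ∘ₗ g) p) :=
  congrArg (Ideal.Quotient.mk J) (algOf_comp_apply f g p)

theorem quotientMapₐ_algOf_comm {g : (α → F) →ₗ[F] (α → F)} (hf : J ≤ J.comap (algOf f))
    (hg : J ≤ J.comap (algOf g)) (hfg : f ∘ₗ g = g ∘ₗ f) (z : MvPolynomial α F ⧸ J) :
    Ideal.quotientMapₐ J (algOf f) hf (Ideal.quotientMapₐ J (algOf g) hg z) =
      Ideal.quotientMapₐ J (algOf g) hg (Ideal.quotientMapₐ J (algOf f) hf z) := by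
  obtain ⟨p, rfl⟩ := Ideal.Quotient.mk_surjective z
  show Ideal.Quotient.mk J (algOf f (algOf g p)) = Ideal.Quotient.mk J (algOf g (algOf f p))
  rw [algOf_comp_apply, algOf_comp_apply, hfg]

end Quotient

theorem Ideal.Quotient.map_eq_zero_of_mk_mem_span {A B : Type*} [CommRing A] [CommRing B]
    {f : A →+* B} {J : Ideal A} (hJ : J ≤ RingHom.ker f) {S : Set (A ⧸ J)}
    (hS : ∀ s ∈ S, ∃ p, f p = 0 ∧ Ideal.Quotient.mk J p = s) {p : A}
    (hp : Ideal.Quotient.mk J p ∈ Ideal.span S) : f p = 0 :=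
  (Ideal.span_le (I := RingHom.ker (Ideal.Quotient.lift J f fun _ ha => hJ ha))).mpr
    (fun s hs => by obtain ⟨p, hp0, rfl⟩ := hS s hs; exact hp0) hp

theorem map_sub_map_mem_span_mul {R R' K φ ψ : Type*} [CommRing R] [CommRing R'] [Semiring K]
    [Module K R'] [FunLike φ R R'] [RingHomClass φ R R'] [FunLike ψ R R] [RingHomClass ψ R R]
    {S : Set R} (π : φ) (a : ψ) (ha : ∀ s ∈ S, a s = s) {x : R} (hx : x ∈ Ideal.span S) :
    π x - π (a x) ∈ Submodule.span K {y | ∃ s ∈ S, ∃ r, y = π s * π (r - a r)} := by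
  obtain ⟨n, r, s, rfl⟩ := Submodule.mem_span_set'.mp hx
  simp only [map_sum, smul_eq_mul, map_mul, ← Finset.sum_sub_distrib]
  exact Submodule.sum_mem _ fun i _ =>
    Submodule.subset_span ⟨s i, (s i).2, r i, by rw [ha _ (s i).2, map_sub]; ring⟩

namespace DirectSum.IsInternal

variable {R M N ι : Type*} [Semiring R] [AddCommMonoid M] [Module R M] [AddCommMonoid N]
  [Module R N] [DecidableEq ι] {U : ι → Submodule R M}

def proj (hU : IsInternal U) (i : ι) : M →ₗ[R] M :=
  (U i).subtype ∘ₗ component R ι (fun i => U i) i ∘ₗ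
    (LinearEquiv.ofBijective (coeLinearMap U) hU).symm.toLinearMap

variable (hU : IsInternal U)

theorem proj_mem (i : ι) (w : M) : hU.proj i w ∈ U i := Submodule.coe_mem _

theorem proj_apply_of_mem {i : ι} {w : M} (hw : w ∈ U i) : hU.proj i w = w :=
  congrArg Subtype.val (hU.ofBijective_coeLinearMap_of_mem hw)

theorem proj_apply_of_mem_of_ne {i j : ι} (hij : i ≠ j) {w : M} (hw : w ∈ U i) :
    hU.proj j w = 0 :=
  congrArg Subtype.val (hU.ofBijective_coeLinearMap_of_mem_ne hij hw)

theorem sum_proj [Fintype ι] (w : M) : ∑ i, hU.proj i w = w := by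
  set e := LinearEquiv.ofBijective (coeLinearMap U) hU
  have h := congrArg (coeLinearMap U) (sum_univ_of (e.symm w))
  simp only [map_sum, coeLinearMap_of] at h
  exact h.trans (e.apply_symm_apply w)

theorem proj_comp_of_le_comap [Fintype ι] {V : ι → Submodule R N} (hV : IsInternal V)
    {f : M →ₗ[R] N} {τ : ι → ι} (hτ : Function.Injective τ) (hf : ∀ i, U i ≤ (V (τ i)).comap f)
    (i : ι) : hV.proj (τ i) ∘ₗ f = f ∘ₗ hU.proj i := by
  ext w
  conv_lhs => rw [LinearMap.comp_apply, ← hU.sum_proj w, map_sum, map_sum]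
  refine (Finset.sum_eq_single i (fun j _ hji => ?_) (by simp)).trans
    (hV.proj_apply_of_mem (hf i (hU.proj_mem i w)))
  exact hV.proj_apply_of_mem_of_ne (hτ.ne hji) (hf j (hU.proj_mem j w))

end DirectSum.IsInternal

section CrossIdeal

variable {β : Type} [Fintype β] {ι κ : Type*}

def crossIdeal (U : ι → Submodule F (β → F)) : Ideal (MvPolynomial β F) :=
  Ideal.span {x | ∃ i j, i ≠ j ∧ ∃ u ∈ U i, ∃ u' ∈ U j, x = lin u * lin u'}

theorem crossIdeal_le_ker_constantCoeff (U : ι → Submodule F (β → F)) :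
    crossIdeal U ≤ RingHom.ker (constantCoeff : MvPolynomial β F →+* F) :=
  Ideal.span_le.mpr <| by
    rintro _ ⟨i, j, -, u, -, u', -, rfl⟩
    simp [constantCoeff_lin]

variable {U : ι → Submodule F (α → F)} {V : κ → Submodule F (β → F)} {f : (α → F) →ₗ[F] (β → F)}

theorem crossIdeal_le_comap_algOf
    (hf : ∀ i j, i ≠ j → ∀ u ∈ U i, ∀ u' ∈ U j, lin (f u) * lin (f u') ∈ crossIdeal V) :
    crossIdeal U ≤ (crossIdeal V).comap (algOf f) :=
  Ideal.span_le.mpr <| by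
    rintro _ ⟨i, j, hij, u, hu, u', hu', rfl⟩
    simpa [algOf_lin] using hf i j hij u hu u' hu'

theorem crossIdeal_le_comap_algOf_of_le_comap {τ : ι → κ} (hτ : Function.Injective τ)
    (hf : ∀ i, U i ≤ (V (τ i)).comap f) :
    crossIdeal U ≤ (crossIdeal V).comap (algOf f) :=
  crossIdeal_le_comap_algOf fun i j hij u hu u' hu' =>
    Ideal.subset_span ⟨τ i, τ j, hτ.ne hij, f u, hf i hu, f u', hf j hu', rfl⟩

theorem crossIdeal_le_comap_algOf_proj [DecidableEq ι] (hU : DirectSum.IsInternal U) (i : ι) :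
    crossIdeal U ≤ (crossIdeal U).comap (algOf (hU.proj i)) := by
  refine crossIdeal_le_comap_algOf fun j k hjk u hu u' hu' => ?_
  rcases eq_or_ne j i with rfl | hji
  · simp [hU.proj_apply_of_mem_of_ne hjk.symm hu', lin_zero]
  · simp [hU.proj_apply_of_mem_of_ne hji hu, lin_zero]

end CrossIdeal

theorem Jideal_eq_crossIdeal {n m : ℕ} (σ : Representation F G (Fin m → F))
    (ι : (Fin n → F) →ₗ[F] (Fin m → F)) (C : Set G) :
    Jideal σ ι C = crossIdeal fun c : C => (LinearMap.range ι).map (σ c) := by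
  refine congrArg Ideal.span (Set.ext fun x => ⟨?_, ?_⟩)
  · rintro ⟨c, hc, c', hc', hne, v, v', rfl⟩
    exact ⟨⟨c, hc⟩, ⟨c', hc'⟩, fun h => hne (congrArg Subtype.val h),
      _, ⟨ι v, ⟨v, rfl⟩, rfl⟩, _, ⟨ι v', ⟨v', rfl⟩, rfl⟩, rfl⟩
  · rintro ⟨⟨c, hc⟩, ⟨c', hc'⟩, hne, _, ⟨_, ⟨v, rfl⟩, rfl⟩, _, ⟨_, ⟨v', rfl⟩, rfl⟩, rfl⟩
    exact ⟨c, hc, c', hc', fun h => hne (Subtype.ext h), v, v', rfl⟩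

namespace Subgroup.IsComplement

variable {H : Subgroup G} {C : Set G}

theorem toLeftFun_eq (hC : IsComplement C H) {g : G} {c : C} (h : (c : G)⁻¹ * g ∈ H) :
    hC.toLeftFun g = c :=
  (isComplement_iff_existsUnique_inv_mul_mem.mp hC g).unique (hC.inv_toLeftFun_mul_mem g) h

theorem toLeftFun_mul_injective (hC : IsComplement C H) (g : G) :
    Function.Injective fun c : C => hC.toLeftFun (g * c) := by
  intro c c' h
  have hc := hC.inv_toLeftFun_mul_mem (g * c)
  have hc' := hC.inv_toLeftFun_mul_mem (g * c')
  rw [show hC.toLeftFun (g * c) = hC.toLeftFun (g * c') from h] at hc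
  have hcc' : (c' : G)⁻¹ * c ∈ H := by simpa [mul_assoc] using H.mul_mem (H.inv_mem hc') hc
  exact ((hC.toLeftFun_eq (c := c) (by simp [H.one_mem])).symm.trans (hC.toLeftFun_eq hcc'))

end Subgroup.IsComplement

section InducedDecomposition

variable {W : Type*} [AddCommMonoid W] [Module F W] {H : Subgroup G} {C : Set G}
  {σ : Representation F G W} {V : Submodule F W}

theorem Representation.map_le_comap_map (hV : ∀ h : H, V ≤ V.comap (σ h)) {g c c' : G}
    (h : c'⁻¹ * (g * c) ∈ H) : V.map (σ c) ≤ (V.map (σ c')).comap (σ g) := by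
  rintro _ ⟨v, hv, rfl⟩
  refine ⟨σ (c'⁻¹ * (g * c)) v, hV ⟨_, h⟩ hv, ?_⟩
  simp only [← Module.End.mul_apply, ← map_mul, mul_inv_cancel_left]

theorem Representation.proj_comp_of_inv_mul_mem [Fintype C] [DecidableEq C]
    (hV : ∀ h : H, V ≤ V.comap (σ h)) (hC : Subgroup.IsComplement C H)
    (hU : DirectSum.IsInternal fun c : C => V.map (σ c)) {g : G} {c c' : C}
    (h : (c' : G)⁻¹ * (g * c) ∈ H) : hU.proj c' ∘ₗ σ g = σ g ∘ₗ hU.proj c := by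
  obtain rfl : hC.toLeftFun (g * c) = c' := hC.toLeftFun_eq h
  exact hU.proj_comp_of_le_comap hU (hC.toLeftFun_mul_injective g)
    (fun c => σ.map_le_comap_map hV (hC.inv_toLeftFun_mul_mem _)) c

variable [DecidableEq C] (hU : DirectSum.IsInternal fun c : C => V.map (σ c)) (h1 : (1 : G) ∈ C)

theorem Representation.range_proj_one_le : LinearMap.range (hU.proj ⟨1, h1⟩) ≤ V := by
  rintro _ ⟨w, rfl⟩
  simpa using hU.proj_mem ⟨1, h1⟩ w

variable {X : Type*} [AddCommMonoid X] [Module F X] {ι : X →ₗ[F] W}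

theorem Representation.proj_one_comp_of_range_le (hι : LinearMap.range ι ≤ V) :
    hU.proj ⟨1, h1⟩ ∘ₗ ι = ι :=
  LinearMap.ext fun x => hU.proj_apply_of_mem ⟨ι x, hι ⟨x, rfl⟩, by simp⟩

theorem Representation.proj_one_comp_comp_eq_zero (hV : ∀ h : H, V ≤ V.comap (σ h))
    (hC : Subgroup.IsComplement C H) (hι : LinearMap.range ι ≤ V) {g : G} (hg : g ∉ H) :
    hU.proj ⟨1, h1⟩ ∘ₗ (σ g ∘ₗ ι) = 0 := by
  have hne : hC.toLeftFun g ≠ ⟨1, h1⟩ := fun h => hg (by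
    simpa [h] using hC.inv_toLeftFun_mul_mem g)
  refine LinearMap.ext fun x => hU.proj_apply_of_mem_of_ne hne ?_
  exact σ.map_le_comap_map hV (c := 1) (by simpa using hC.inv_toLeftFun_mul_mem g)
    ⟨ι x, hι ⟨x, rfl⟩, by simp⟩

end InducedDecomposition

theorem crossIdeal_map_le_comap_algOf {H : Subgroup G} {C : Set G}
    {σ : Representation F G (α → F)} {V : Submodule F (α → F)}
    (hV : ∀ h : H, V ≤ V.comap (σ h)) (hC : Subgroup.IsComplement C H) (g : G) :
    crossIdeal (fun c : C => V.map (σ c)) ≤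
      (crossIdeal fun c : C => V.map (σ c)).comap (algOf (σ g)) :=
  crossIdeal_le_comap_algOf_of_le_comap (hC.toLeftFun_mul_injective g)
    fun _ => σ.map_le_comap_map hV (hC.inv_toLeftFun_mul_mem _)

/-- Invariance of a class in `R` is expressed via representatives (`J` is a `G`-stable ideal),
and positivity via vanishing constant coefficient. -/
theorem stmt8_general
    {G : Type} [Group G] [Fintype G]
    (H : Subgroup G) {nV m : ℕ}
    (ρ : Representation F H (Fin nV → F))
    (σ : Representation F G (Fin m → F))
    (ι : (Fin nV → F) →ₗ[F] (Fin m → F)) (hι : Function.Injective ι)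
    (hequiv : ∀ h : H, σ h ∘ₗ ι = ι ∘ₗ ρ h)
    (C : Set G) (hC : Subgroup.IsComplement C (H : Set G)) (h1 : (1:G) ∈ C)
    (hindep : iSupIndep fun c : C => (LinearMap.range ι).map (σ c.1))
    (hspan : ⨆ c : C, (LinearMap.range ι).map (σ c.1) = ⊤)
    (hHG : H ≠ ⊤) :
    ∀ x : MvPolynomial (Fin m) F ⧸ Jideal σ ι C,
      x ∈ Ideal.span {y | (∃ p, MvPolynomial.constantCoeff p = 0 ∧
            Ideal.Quotient.mk (Jideal σ ι C) p = y) ∧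
          (∀ (g : G) (p), Ideal.Quotient.mk (Jideal σ ι C) p = y →
            Ideal.Quotient.mk (Jideal σ ι C) (algOf (σ g) p) = y)} →
      (∃ q : MvPolynomial (Fin nV) F,
        Ideal.Quotient.mk (Jideal σ ι C) (algOf ι q) = x) →
      x ∈ Submodule.span F {y | ∃ a b : MvPolynomial (Fin m) F ⧸ Jideal σ ι C,
        ((∃ q, MvPolynomial.constantCoeff q = 0 ∧
            Ideal.Quotient.mk (Jideal σ ι C) (algOf ι q) = a) ∧
          (∀ (h : H) (p), Ideal.Quotient.mk (Jideal σ ι C) p = a →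
            Ideal.Quotient.mk (Jideal σ ι C) (algOf (σ h) p) = a)) ∧
        (∃ q, MvPolynomial.constantCoeff q = 0 ∧
          Ideal.Quotient.mk (Jideal σ ι C) (algOf ι q) = b) ∧
        y = a * b} := by
  classical
  set J := Jideal σ ι C with hJ
  rw [Jideal_eq_crossIdeal] at hJ
  intro x hx ⟨q, hq⟩
  have := Fintype.ofFinite C
  have hV (h : H) : LinearMap.range ι ≤ (LinearMap.range ι).comap (σ h) := by
    rw [← Submodule.map_le_iff_le_comap, ← LinearMap.range_comp, hequiv]
    exact LinearMap.range_comp_le_range _ _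
  have hU := DirectSum.isInternal_submodule_of_iSupIndep_of_iSup_eq_top hindep hspan
  obtain ⟨g₀, -, hg₀⟩ := SetLike.exists_of_lt hHG.lt_top
  have hJσ (g : G) : J ≤ J.comap (algOf (σ g)) := hJ ▸ crossIdeal_map_le_comap_algOf hV hC g
  have hJπ : J ≤ J.comap (algOf (hU.proj ⟨1, h1⟩)) := hJ ▸ crossIdeal_le_comap_algOf_proj hU _
  let act (g : G) := Ideal.quotientMapₐ J (algOf (σ g)) (hJσ g)
  let π := Ideal.quotientMapₐ J (algOf (hU.proj ⟨1, h1⟩)) hJπ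
  have hq0 : constantCoeff q = 0 := (constantCoeff_algOf ι q).symm.trans <|
    Ideal.Quotient.map_eq_zero_of_mk_mem_span (hJ ▸ crossIdeal_le_ker_constantCoeff _)
      (fun s hs => by exact hs.1) (hq ▸ hx)
  have hπx : π x = x := by
    rw [← hq, quotientMapₐ_algOf_mk_algOf, σ.proj_one_comp_of_range_le hU h1 le_rfl]
  have hπax : π (act g₀ x) = 0 := by
    rw [← hq, quotientMapₐ_algOf_mk_algOf, quotientMapₐ_algOf_mk_algOf,
      σ.proj_one_comp_comp_eq_zero hU h1 hV hC le_rfl hg₀, algOf_zero, hq0, map_zero, map_zero]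
  have key := map_sub_map_mem_span_mul (K := F) π (act g₀) (fun s hs => by
    obtain ⟨⟨p, -, rfl⟩, hinv⟩ := hs
    exact hinv g₀ p rfl) hx
  rw [hπx, hπax, sub_zero] at key
  refine Submodule.span_mono ?_ key
  rintro _ ⟨_, ⟨⟨p, hp0, rfl⟩, hpinv⟩, r, rfl⟩
  obtain ⟨r, rfl⟩ := Ideal.Quotient.mk_surjective r
  have hπT := exists_algOf_eq_algOf_of_range_le hι (σ.range_proj_one_le hU h1)
  obtain ⟨u₁, hu₁, hpu₁⟩ := hπT p
  obtain ⟨u₂, hu₂, hru₂⟩ := hπT (r - algOf (σ g₀) r)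
  refine ⟨_, _, ⟨⟨u₁, hu₁.trans hp0, congrArg _ hpu₁.symm⟩, fun h p' hp' => ?_⟩,
    ⟨u₂, by simp [hu₂, constantCoeff_algOf], congrArg _ hru₂.symm⟩, rfl⟩
  calc Ideal.Quotient.mk J (algOf (σ h) p') = act h (π (Ideal.Quotient.mk J p)) :=
        congrArg (act h) hp'
    _ = π (act h (Ideal.Quotient.mk J p)) :=
      quotientMapₐ_algOf_comm _ _ (σ.proj_comp_of_inv_mul_mem hV hC hU (by simp)).symm _
    _ = π (Ideal.Quotient.mk J p) := congrArg π (hpinv h p rfl)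

/-- in `R = S(W)/J`, with `T` the image of `S(V)`, one has
`R₊^G R ∩ T ⊆ T₊^H T₊`.  Invariance of a class in `R` is expressed via representatives
(`J` is a `G`-stable ideal), and positivity via vanishing constant coefficient. -/
theorem stmt8
    {G : Type} [Group G] [Fintype G]
    (hchar : (Fintype.card G : F) ≠ 0)
    (H : Subgroup G) {nV m : ℕ}
    (ρ : Representation F H (Fin nV → F))
    (σ : Representation F G (Fin m → F))
    (ι : (Fin nV → F) →ₗ[F] (Fin m → F)) (hι : Function.Injective ι)
    (hequiv : ∀ h : H, σ h ∘ₗ ι = ι ∘ₗ ρ h)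
    (C : Set G) (hC : Subgroup.IsComplement C (H : Set G)) (h1 : (1:G) ∈ C)
    (hindep : iSupIndep fun c : C => (LinearMap.range ι).map (σ c.1))
    (hspan : ⨆ c : C, (LinearMap.range ι).map (σ c.1) = ⊤)
    (hHG : H ≠ ⊤) :
    ∀ x : MvPolynomial (Fin m) F ⧸ Jideal σ ι C,
      x ∈ Ideal.span {y | (∃ p, MvPolynomial.constantCoeff p = 0 ∧
            Ideal.Quotient.mk (Jideal σ ι C) p = y) ∧
          (∀ (g : G) (p), Ideal.Quotient.mk (Jideal σ ι C) p = y →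
            Ideal.Quotient.mk (Jideal σ ι C) (algOf (σ g) p) = y)} →
      (∃ q : MvPolynomial (Fin nV) F,
        Ideal.Quotient.mk (Jideal σ ι C) (algOf ι q) = x) →
      x ∈ Submodule.span F {y | ∃ a b : MvPolynomial (Fin m) F ⧸ Jideal σ ι C,
        ((∃ q, MvPolynomial.constantCoeff q = 0 ∧
            Ideal.Quotient.mk (Jideal σ ι C) (algOf ι q) = a) ∧
          (∀ (h : H) (p), Ideal.Quotient.mk (Jideal σ ι C) p = a →
            Ideal.Quotient.mk (Jideal σ ι C) (algOf (σ h) p) = a)) ∧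
        (∃ q, MvPolynomial.constantCoeff q = 0 ∧
          Ideal.Quotient.mk (Jideal σ ι C) (algOf ι q) = b) ∧
        y = a * b} :=
  stmt8_general H ρ σ ι hι hequiv C hC h1 hindep hspan hHG
end
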